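/- arXiv:2501.16351 — 4 statements merged into one kernel-verified Lean document; each statement's English description precedes it below -/
import Mathlib

section
/- Let J = J_0 ⊕ J_1 be a Jordan superalgebra over a field of characteristic 0 with e ∈ J_0 satisfying e·e = 0, and odd elements f_1, f_2 with e·f_1 = μ f_1 + f_2 and e·f_2 = μ f_2 for some scalar μ. Then 2μ^3 = 0, i.e. μ = 0. -/
/-- The sign `(-1)^a` for a parity `a : ZMod 2`, as an element of the field `F`. -/
def sgn (F : Type*) [Field F] (a : ZMod 2) : F := if a = 0 then 1 else -1

/-- A Jordan superalgebra structure: a `Z/2`-graded vector space `J = V 0 ⊕ V 1`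
with a bilinear multiplication respecting the grading, super-commutative, and
satisfying the graded Jordan identity. -/
structure IsJordanSuperalgebra (F : Type*) [Field F] {J : Type*} [AddCommGroup J] [Module F J]
    (mul : J →ₗ[F] J →ₗ[F] J) (V : ZMod 2 → Submodule F J) : Prop where
  decomp : DirectSum.IsInternal V
  grading : ∀ a b : ZMod 2, ∀ x ∈ V a, ∀ y ∈ V b, mul x y ∈ V (a + b)
  supercomm : ∀ a b : ZMod 2, ∀ x ∈ V a, ∀ y ∈ V b, mul x y = sgn F (a * b) • mul y x
  jordan : ∀ a b c d : ZMod 2, ∀ x ∈ V a, ∀ y ∈ V b, ∀ z ∈ V c, ∀ t ∈ V d,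
    mul (mul (mul x y) z) t
      + sgn F (b * c + b * d + c * d) • mul (mul (mul x t) z) y
      + sgn F (a * b + a * c + a * d + c * d) • mul (mul (mul y t) z) x
    = mul (mul x y) (mul z t)
      + sgn F (d * (b + c)) • mul (mul x t) (mul y z)
      + sgn F (b * c) • mul (mul x z) (mul y t)

/-! If `e` is even with `e² = 0`, the Jordan identity at `(e, e, e, t)` collapses to
`2 L_e³ t = 0`, since every sign involved is `+1`. On an eigenvector of `L_e` with
eigenvalue `μ` this reads `2 μ³ = 0`. -/

@[simp]
theorem sgn_zero (F : Type*) [Field F] : sgn F 0 = 1 := if_pos rfl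

namespace IsJordanSuperalgebra

variable {F : Type*} [Field F] {J : Type*} [AddCommGroup J] [Module F J]
  {mul : J →ₗ[F] J →ₗ[F] J} {V : ZMod 2 → Submodule F J}

theorem mul_comm_of_mem_zero (hJ : IsJordanSuperalgebra F mul V) {e : J} (he : e ∈ V 0)
    {d : ZMod 2} {t : J} (ht : t ∈ V d) : mul t e = mul e t := by
  simpa using hJ.supercomm d 0 t ht e he

theorem two_smul_mul_mul_mul_eq_zero (hJ : IsJordanSuperalgebra F mul V) {e : J}
    (he : e ∈ V 0) (hee : mul e e = 0) {d : ZMod 2} {t : J} (ht : t ∈ V d) :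
    (2 : F) • mul e (mul e (mul e t)) = 0 := by
  have het : mul e t ∈ V d := by simpa using hJ.grading 0 d e he t ht
  have heet : mul e (mul e t) ∈ V d := by simpa using hJ.grading 0 d e he _ het
  have h := hJ.jordan 0 0 0 d e he e he e he t ht
  simp only [hee, map_zero, LinearMap.zero_apply, mul_zero, zero_mul, add_zero, sgn_zero,
    one_smul, zero_add, hJ.mul_comm_of_mem_zero he het, hJ.mul_comm_of_mem_zero he heet] at h
  rw [two_smul, h]

end IsJordanSuperalgebra

theorem jordan_block_squarezero_general (F : Type*) [Field F] [CharZero F] {J : Type*}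
    [AddCommGroup J] [Module F J]
    (mul : J →ₗ[F] J →ₗ[F] J) (V : ZMod 2 → Submodule F J)
    (hJ : IsJordanSuperalgebra F mul V)
    (e f₂ : J) (μ : F) (he : e ∈ V 0) (hf₂ : f₂ ∈ V 1)
    (hee : mul e e = 0) (hef₂ : mul e f₂ = μ • f₂)
    (hf₂ne : f₂ ≠ 0) :
    μ = 0 := by
  have h := hJ.two_smul_mul_mul_mul_eq_zero he hee hf₂
  simp only [hef₂, map_smul, smul_smul] at h
  have hμ : 2 * (μ * μ * μ) = 0 := (smul_eq_zero.mp h).resolve_right hf₂ne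
  simpa using hμ

theorem jordan_block_squarezero (F : Type*) [Field F] [CharZero F] {J : Type*}
    [AddCommGroup J] [Module F J]
    (mul : J →ₗ[F] J →ₗ[F] J) (V : ZMod 2 → Submodule F J)
    (hJ : IsJordanSuperalgebra F mul V)
    (e f₁ f₂ : J) (μ : F) (he : e ∈ V 0) (hf₁ : f₁ ∈ V 1) (hf₂ : f₂ ∈ V 1)
    (hee : mul e e = 0) (hef₁ : mul e f₁ = μ • f₁ + f₂) (hef₂ : mul e f₂ = μ • f₂)
    (hf₂ne : f₂ ≠ 0) :
    μ = 0 :=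
  jordan_block_squarezero_general F mul V hJ e f₂ μ he hf₂ hee hef₂ hf₂ne
end

section
/- Let J = J_0 ⊕ J_1 be a Jordan superalgebra over a field of characteristic 0 with an idempotent e ∈ J_0 (e·e = e) and odd elements f_1, f_2 satisfying e·f_1 = μ f_1 + f_2 and e·f_2 = μ f_2 for a scalar μ. Then both 1 - 6μ + 6μ^2 = 0 and μ(μ - 1)(2μ - 1) = 0 must hold, which is impossible; hence no such configuration exists. Equivalently: there is no scalar μ in a field of characteristic 0 with 1 - 6μ + 6μ^2 = 0 and (μ-1)μ(2μ-1) = 0. -/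
/-!
The graded Jordan identity for `(e, e, e, f)` with `e` an even idempotent and `f` odd reads
`L f + 2 L³ f = 3 L² f` for `L = mul e`, so `L` is annihilated on the odd part by
`p = X (X - 1) (2X - 1)`. On a Jordan chain `L f₂ = μ f₂`, `L f₁ = μ f₁ + f₂` one has
`p(L) f₁ = p(μ) f₁ + p'(μ) f₂`, so `μ` would be a common root of `p` and `p'`, which
generate the unit ideal over `ℤ`.
-/

open Polynomial

theorem Module.End.aeval_apply_of_apply_eq_smul_add {R M : Type*} [CommRing R] [AddCommGroup M]
    [Module R M] {T : Module.End R M} {μ : R} {v w : M} (hw : T w = μ • w)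
    (hv : T v = μ • v + w) (p : R[X]) :
    aeval T p v = p.eval μ • v + p.derivative.eval μ • w := by
  induction p using Polynomial.induction_on with
  | C a => simp [Module.algebraMap_end_apply]
  | add p q hp hq =>
    simp only [map_add, LinearMap.add_apply, hp, hq, eval_add, add_smul]
    abel
  | monomial n a ih =>
    rw [pow_succ, ← mul_assoc, map_mul, Module.End.mul_apply, aeval_X, hv, map_add, map_smul, ih,
      Module.End.aeval_apply_of_mem_apply_eq_smul hw]
    simp only [derivative_mul, derivative_X, eval_add, eval_mul, eval_X, eval_one, smul_add,
      smul_smul, add_smul]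
    module

theorem eval_eq_zero_and_derivative_eval_eq_zero_of_aeval_apply_eq_zero {K M : Type*} [Field K]
    [AddCommGroup M] [Module K M] {T : Module.End K M} {μ : K} {v w : M} (hw : T w = μ • w)
    (hv : T v = μ • v + w) (hw0 : w ≠ 0) {p : K[X]} (hpv : aeval T p v = 0)
    (hpw : aeval T p w = 0) :
    p.eval μ = 0 ∧ p.derivative.eval μ = 0 := by
  have hpμ : p.eval μ = 0 := by
    rw [Module.End.aeval_apply_of_mem_apply_eq_smul hw] at hpw
    exact (smul_eq_zero.mp hpw).resolve_right hw0
  rw [Module.End.aeval_apply_of_apply_eq_smul_add hw hv, hpμ, zero_smul, zero_add] at hpv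
  exact ⟨hpμ, (smul_eq_zero.mp hpv).resolve_right hw0⟩

noncomputable def peircePolynomial (R : Type*) [CommRing R] : R[X] := X * (X - 1) * (2 * X - 1)

theorem peircePolynomial_eval_ne_zero_or_derivative_eval_ne_zero {R : Type*} [CommRing R]
    [Nontrivial R] (μ : R) :
    (peircePolynomial R).eval μ ≠ 0 ∨ (derivative (peircePolynomial R)).eval μ ≠ 0 := by
  by_contra! ⟨hp, hdp⟩
  simp only [peircePolynomial, derivative_mul, derivative_sub, derivative_X, derivative_one,
    derivative_ofNat, eval_add, eval_sub, eval_mul, eval_X, eval_one, eval_ofNat,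
    eval_zero] at hp hdp
  have : (1 : R) = 0 := by
    linear_combination (18 - 36 * μ) * hp + (12 * μ ^ 2 - 12 * μ + 1) * hdp
  exact one_ne_zero this

namespace IsJordanSuperalgebra

variable {F : Type*} [Field F] {J : Type*} [AddCommGroup J] [Module F J]
  {mul : J →ₗ[F] J →ₗ[F] J} {V : ZMod 2 → Submodule F J}

theorem mul_comm_of_mem_odd_of_mem_even (hJ : IsJordanSuperalgebra F mul V) {x y : J}
    (hx : x ∈ V 1) (hy : y ∈ V 0) : mul x y = mul y x := by
  simpa [sgn] using hJ.supercomm 1 0 x hx y hy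

theorem mul_mem_odd_of_mem_even (hJ : IsJordanSuperalgebra F mul V) {x y : J}
    (hx : x ∈ V 0) (hy : y ∈ V 1) : mul x y ∈ V 1 := by
  simpa using hJ.grading 0 1 x hx y hy

theorem aeval_peircePolynomial_apply_of_mem_odd (hJ : IsJordanSuperalgebra F mul V) {e f : J}
    (he : e ∈ V 0) (hee : mul e e = e) (hf : f ∈ V 1) :
    aeval (mul e) (peircePolynomial F) f = 0 := by
  have hef := hJ.mul_mem_odd_of_mem_even he hf
  have hjordan := hJ.jordan 0 0 0 1 e he e he e he f hf
  simp only [sgn, mul_zero, zero_mul, add_zero, if_pos, one_smul, hee,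
    hJ.mul_comm_of_mem_odd_of_mem_even hef he,
    hJ.mul_comm_of_mem_odd_of_mem_even (hJ.mul_mem_odd_of_mem_even he hef) he] at hjordan
  simp only [peircePolynomial, map_mul, map_sub, aeval_X, map_one, map_ofNat, Module.End.mul_apply,
    LinearMap.sub_apply, Module.End.one_apply, Module.End.ofNat_apply, map_nsmul]
  linear_combination (norm := module) hjordan

end IsJordanSuperalgebra

theorem no_jordan_block_idempotent_general (F : Type*) [Field F] {J : Type*}
    [AddCommGroup J] [Module F J]
    (mul : J →ₗ[F] J →ₗ[F] J) (V : ZMod 2 → Submodule F J)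
    (hJ : IsJordanSuperalgebra F mul V)
    (e f₁ f₂ : J) (μ : F) (he : e ∈ V 0) (hf₁ : f₁ ∈ V 1) (hf₂ : f₂ ∈ V 1)
    (hee : mul e e = e) (hef₁ : mul e f₁ = μ • f₁ + f₂) (hef₂ : mul e f₂ = μ • f₂)
    (hf₂ne : f₂ ≠ 0) :
    False := by
  obtain ⟨hroot, hroot'⟩ :=
    eval_eq_zero_and_derivative_eval_eq_zero_of_aeval_apply_eq_zero hef₂ hef₁ hf₂ne
      (hJ.aeval_peircePolynomial_apply_of_mem_odd he hee hf₁)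
      (hJ.aeval_peircePolynomial_apply_of_mem_odd he hee hf₂)
  exact (peircePolynomial_eval_ne_zero_or_derivative_eval_ne_zero μ).elim (· hroot) (· hroot')

theorem no_jordan_block_idempotent (F : Type*) [Field F] [CharZero F] {J : Type*}
    [AddCommGroup J] [Module F J]
    (mul : J →ₗ[F] J →ₗ[F] J) (V : ZMod 2 → Submodule F J)
    (hJ : IsJordanSuperalgebra F mul V)
    (e f₁ f₂ : J) (μ : F) (he : e ∈ V 0) (hf₁ : f₁ ∈ V 1) (hf₂ : f₂ ∈ V 1)
    (hee : mul e e = e) (hef₁ : mul e f₁ = μ • f₁ + f₂) (hef₂ : mul e f₂ = μ • f₂)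
    (hf₂ne : f₂ ≠ 0) :
    False :=
  no_jordan_block_idempotent_general F mul V hJ e f₁ f₂ μ he hf₁ hf₂ hee hef₁ hef₂ hf₂ne
end

section
/- Let J be a Jordan superalgebra over a field of characteristic 0 with even elements e_1, e_2 satisfying e_1·e_1 = e_2, e_2·e_2 = 0, e_1·e_2 = 0 (even part isomorphic to B_3), and an odd element f with e_1·f = μ f and e_2·f = ν f. Then μ = 0 and ν = 0. -/
namespace IsJordanSuperalgebra

variable {F : Type*} [Field F] {J : Type*} [AddCommGroup J] [Module F J]
  {mul : J →ₗ[F] J →ₗ[F] J} {V : ZMod 2 → Submodule F J}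

theorem mul_comm_of_mem_zero_s13 (hJ : IsJordanSuperalgebra F mul V) {b : ZMod 2} {x y : J}
    (hx : x ∈ V 0) (hy : y ∈ V b) : mul x y = mul y x := by
  simpa using hJ.supercomm 0 b x hx y hy

/-- The graded Jordan identity `J(x, x, x, f) = 0`, all of whose signs are `+1` as `x` is even. -/
theorem mul_self_mul_mul_eq (hJ : IsJordanSuperalgebra F mul V) {d : ZMod 2} {x f : J}
    {l k : F} (hx : x ∈ V 0) (hf : f ∈ V d) (hxf : mul x f = l • f)
    (hx2f : mul (mul x x) f = k • f) :
    mul (mul (mul x x) x) f = (3 * l * k - 2 * l ^ 3) • f := by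
  have hfx : mul f x = l • f := by rw [← hJ.mul_comm_of_mem_zero_s13 hx hf, hxf]
  have hfx2 : mul f (mul x x) = k • f := by
    rw [← hJ.mul_comm_of_mem_zero_s13 (by simpa using hJ.grading 0 0 x hx x hx) hf, hx2f]
  have h := hJ.jordan 0 0 0 d x hx x hx x hx f hf
  simp only [mul_zero, zero_mul, add_zero, sgn_zero, hxf, hfx, hfx2, hx2f,
    map_smul, LinearMap.smul_apply, smul_smul] at h
  linear_combination (norm := module) h

theorem eq_zero_of_mul_eq_smul [CharZero F] (hJ : IsJordanSuperalgebra F mul V) {d : ZMod 2}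
    {x f : J} {l : F} (hx : x ∈ V 0) (hf : f ∈ V d) (hf0 : f ≠ 0) (hxf : mul x f = l • f)
    (hx2f : mul (mul x x) f = 0) (hx3 : mul (mul x x) x = 0) : l = 0 := by
  have h := hJ.mul_self_mul_mul_eq hx hf hxf (k := 0) (by rw [hx2f, zero_smul])
  rw [hx3, map_zero, LinearMap.zero_apply, eq_comm, smul_eq_zero] at h
  simpa using h.resolve_right hf0

end IsJordanSuperalgebra

theorem B3_even_part_acts_trivially (F : Type*) [Field F] [CharZero F] {J : Type*}
    [AddCommGroup J] [Module F J]
    (mul : J →ₗ[F] J →ₗ[F] J) (V : ZMod 2 → Submodule F J)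
    (hJ : IsJordanSuperalgebra F mul V)
    (e₁ e₂ f : J) (μ ν : F)
    (he₁ : e₁ ∈ V 0) (he₂ : e₂ ∈ V 0) (hf : f ∈ V 1)
    (h11 : mul e₁ e₁ = e₂) (h22 : mul e₂ e₂ = 0) (h12 : mul e₁ e₂ = 0)
    (h1f : mul e₁ f = μ • f) (h2f : mul e₂ f = ν • f) (hf0 : f ≠ 0) :
    μ = 0 ∧ ν = 0 := by
  have hν : ν = 0 :=
    hJ.eq_zero_of_mul_eq_smul he₂ hf hf0 h2f (by simp [h22]) (by simp [h22])
  refine ⟨hJ.eq_zero_of_mul_eq_smul he₁ hf hf0 h1f (by simp [h11, h2f, hν]) ?_, hν⟩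
  rw [h11, ← hJ.mul_comm_of_mem_zero_s13 he₁ he₂, h12]
end

section
/- Let J be a (1,3)-type superalgebra over ℂ with even basis {e} and odd basis {f_1, f_2, f_3}, products e·e = 0, e·f_1 = μ f_1 + f_2, e·f_2 = μ f_2 + f_3, e·f_3 = μ f_3 (L_e a single Jordan block), f_i f_j = ξ_{ij} e. If J is a Jordan superalgebra then μ = 0 and all ξ_{ij} = 0; i.e. the only Jordan superalgebra with L_e a full 3×3 Jordan block and e² = 0 has multiplication e·f_1 = f_2, e·f_2 = f_3 and trivial odd-odd products. -/
@[simp]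
theorem sgn_one (F : Type*) [Field F] : sgn F 1 = -1 := if_neg one_ne_zero

theorem LinearIndependent.eq_zero_of_triple {R M : Type*} [Semiring R] [AddCommMonoid M]
    [Module R M] {x y z : M} (h : LinearIndependent R ![x, y, z]) {s t u : R}
    (h' : s • x + t • y + u • z = 0) : s = 0 ∧ t = 0 ∧ u = 0 := by
  replace h := @h (.single 0 s + .single 1 t + .single 2 u) 0 (by simpa [add_assoc] using h')
  exact ⟨by simpa using congr($h 0), by simpa using congr($h 1), by simpa using congr($h 2)⟩

namespace IsJordanSuperalgebra

variable {F : Type*} [Field F] {J : Type*} [AddCommGroup J] [Module F J]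
  {mul : J →ₗ[F] J →ₗ[F] J} {V : ZMod 2 → Submodule F J}

theorem mul_comm_of_mem_even (hJ : IsJordanSuperalgebra F mul V) {b : ZMod 2} {x y : J}
    (hx : x ∈ V 0) (hy : y ∈ V b) : mul y x = mul x y := by
  simpa using (hJ.supercomm 0 b x hx y hy).symm

theorem mul_anticomm_of_mem_odd (hJ : IsJordanSuperalgebra F mul V) {x y : J}
    (hx : x ∈ V 1) (hy : y ∈ V 1) : mul y x = -mul x y := by
  simpa using congr(-$(hJ.supercomm 1 1 x hx y hy)).symm

theorem mul_self_eq_zero_of_mem_odd [NeZero (2 : F)] (hJ : IsJordanSuperalgebra F mul V)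
    {x : J} (hx : x ∈ V 1) : mul x x = 0 := by
  have h : (2 : F) • mul x x = 0 := by
    rw [two_smul]
    nth_rewrite 1 [hJ.mul_anticomm_of_mem_odd hx hx]
    exact neg_add_cancel _
  exact (smul_eq_zero.mp h).resolve_left two_ne_zero

theorem mul_left_cube_eq_zero [NeZero (2 : F)] (hJ : IsJordanSuperalgebra F mul V) {d : ZMod 2}
    {e x : J} (he : e ∈ V 0) (hee : mul e e = 0) (hx : x ∈ V d) :
    mul e (mul e (mul e x)) = 0 := by
  have hex := hJ.grading 0 d e he x hx
  have heex := hJ.grading 0 _ e he _ hex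
  have h := hJ.jordan 0 0 0 d e he e he e he x hx
  simp only [zero_mul, mul_zero, add_zero, zero_add, sgn_zero, one_smul, hee, map_zero,
    LinearMap.zero_apply, hJ.mul_comm_of_mem_even he hex, hJ.mul_comm_of_mem_even he heex] at h
  rw [← two_smul F] at h
  exact (smul_eq_zero.mp h).resolve_left two_ne_zero

theorem eigenvalue_eq_zero_of_jordan_block [CharZero F] (hJ : IsJordanSuperalgebra F mul V)
    {e f₁ f₂ f₃ : J} {μ : F} (he : e ∈ V 0) (hf₁ : f₁ ∈ V 1) (hee : mul e e = 0)
    (hef₁ : mul e f₁ = μ • f₁ + f₂) (hef₂ : mul e f₂ = μ • f₂ + f₃) (hef₃ : mul e f₃ = μ • f₃)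
    (hind : LinearIndependent F ![f₁, f₂, f₃]) : μ = 0 := by
  have h := hJ.mul_left_cube_eq_zero he hee hf₁
  simp only [hef₁, hef₂, hef₃, map_add, map_smul] at h
  have hcube : (μ ^ 3) • f₁ + (3 * μ ^ 2) • f₂ + (3 * μ) • f₃ = 0 := by
    linear_combination (norm := module) h
  simpa using (hind.eq_zero_of_triple hcube).2.2

theorem xi₂₃_eq_zero_of_nilpotent_block [NeZero (2 : F)] (hJ : IsJordanSuperalgebra F mul V)
    {e f₁ f₂ f₃ : J} {ξ₁₃ ξ₂₃ : F} (he : e ∈ V 0) (hf₁ : f₁ ∈ V 1) (hf₂ : f₂ ∈ V 1)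
    (hf₃ : f₃ ∈ V 1) (hee : mul e e = 0) (hef₁ : mul e f₁ = f₂) (hef₂ : mul e f₂ = f₃)
    (h13 : mul f₁ f₃ = ξ₁₃ • e) (h23 : mul f₂ f₃ = ξ₂₃ • e) (he0 : e ≠ 0) : ξ₂₃ = 0 := by
  have h := hJ.jordan 0 0 1 1 e he e he f₁ hf₁ f₂ hf₂
  simp only [mul_zero, mul_one, zero_add, add_zero, sgn_zero, sgn_one, one_smul, neg_smul,
    hee, hef₁, hef₂, hJ.mul_anticomm_of_mem_odd hf₁ hf₃, h13, hJ.mul_anticomm_of_mem_odd hf₂ hf₃,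
    h23, map_zero, map_neg, map_smul, LinearMap.zero_apply, LinearMap.neg_apply,
    LinearMap.smul_apply] at h
  have h' : (2 * ξ₂₃) • e = 0 := by linear_combination (norm := module) -h
  simpa [he0, two_ne_zero] using h'

theorem xi₁₃_smul_eq_of_nilpotent_block [NeZero (2 : F)] (hJ : IsJordanSuperalgebra F mul V)
    {e f₁ f₂ f₃ : J} {ξ₁₂ ξ₁₃ : F} (he : e ∈ V 0) (hf₁ : f₁ ∈ V 1) (hf₂ : f₂ ∈ V 1)
    (hf₃ : f₃ ∈ V 1) (hef₁ : mul e f₁ = f₂) (hef₂ : mul e f₂ = f₃)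
    (h12 : mul f₁ f₂ = ξ₁₂ • e) (h13 : mul f₁ f₃ = ξ₁₃ • e) : ξ₁₃ • f₂ = (2 * ξ₁₂) • f₃ := by
  have h := hJ.jordan 0 1 1 1 e he f₁ hf₁ f₁ hf₁ f₂ hf₂
  simp only [mul_one, zero_add, add_zero, show (1 : ZMod 2) + 1 = 0 from rfl, sgn_one, one_smul,
    neg_smul, hef₁, hef₂, hJ.mul_self_eq_zero_of_mem_odd hf₁, hJ.mul_anticomm_of_mem_odd hf₁ hf₂,
    hJ.mul_anticomm_of_mem_odd hf₁ hf₃, h12, h13, hJ.mul_comm_of_mem_even he hf₂, map_zero,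
    map_neg, map_smul, LinearMap.neg_apply, LinearMap.smul_apply] at h
  linear_combination (norm := module) h

end IsJordanSuperalgebra

theorem full_jordan_block_classification
    {J : Type*} [AddCommGroup J] [Module ℂ J]
    (mul : J →ₗ[ℂ] J →ₗ[ℂ] J) (V : ZMod 2 → Submodule ℂ J)
    (hJ : IsJordanSuperalgebra ℂ mul V)
    (e f₁ f₂ f₃ : J) (μ ξ₁₂ ξ₁₃ ξ₂₃ : ℂ)
    (he : e ∈ V 0) (hf₁ : f₁ ∈ V 1) (hf₂ : f₂ ∈ V 1) (hf₃ : f₃ ∈ V 1)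
    (hee : mul e e = 0)
    (hef₁ : mul e f₁ = μ • f₁ + f₂) (hef₂ : mul e f₂ = μ • f₂ + f₃)
    (hef₃ : mul e f₃ = μ • f₃)
    (h12 : mul f₁ f₂ = ξ₁₂ • e) (h13 : mul f₁ f₃ = ξ₁₃ • e) (h23 : mul f₂ f₃ = ξ₂₃ • e)
    (he0 : e ≠ 0) (hind : LinearIndependent ℂ ![f₁, f₂, f₃]) :
    μ = 0 ∧ ξ₁₂ = 0 ∧ ξ₁₃ = 0 ∧ ξ₂₃ = 0 := by
  obtain rfl : μ = 0 :=
    hJ.eigenvalue_eq_zero_of_jordan_block he hf₁ hee hef₁ hef₂ hef₃ hind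
  simp only [zero_smul, zero_add] at hef₁ hef₂
  have hξ₂₃ := hJ.xi₂₃_eq_zero_of_nilpotent_block he hf₁ hf₂ hf₃ hee hef₁ hef₂ h13 h23 he0
  have hrel := hJ.xi₁₃_smul_eq_of_nilpotent_block he hf₁ hf₂ hf₃ hef₁ hef₂ h12 h13
  obtain ⟨-, hξ₁₃, hξ₁₂⟩ := hind.eq_zero_of_triple (s := 0) (t := ξ₁₃) (u := -(2 * ξ₁₂))
    (by rw [zero_smul, zero_add, hrel, neg_smul, add_neg_cancel])
  exact ⟨rfl, by simpa using hξ₁₂, hξ₁₃, hξ₂₃⟩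
end
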